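/- Consider an uncertain optimization problem with decision space ℝ^n, scenario space ℝ^M, a convex set X ⊆ ℝ^n, objective f : ℝ^n × ℝ^M → ℝ and constraints F_1, …, F_m : ℝ^n × ℝ^M → ℝ, and a metric d on ℝ^n. Let U' = {ξ¹, …, ξ^N} ⊆ ℝ^M be finite and U = conv(U') its convex hull. Assume each F_i and f are jointly quasiconvex as functions on ℝ^n × ℝ^M (i.e. quasiconvex in the pair (y, ξ)), and that for every x ∈ ℝ^n the function y ↦ d(x, y) is quasiconvex. Then a point x ∈ X is recoverable-robust with respect to U if and only if it is recoverable-robust with respect to U'. -/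

import Mathlib

/-! **Statement 6.** For jointly quasiconvex objective and constraints and a recovery metric
that is quasiconvex in its second argument, the recoverable-robust solutions with respect to
a polytope `U = conv{ξ¹, …, ξ^N}` coincide with those with respect to its finitely many
extreme candidates `U' = {ξ¹, …, ξ^N}`. -/

section

variable {n mM m : ℕ}

/-- `(x, y)` is feasible for `Rec(U)`. -/
def RecFeasible (X : Set (Fin n → ℝ)) (F : (Fin n → ℝ) → (Fin mM → ℝ) → Fin m → ℝ)
    (U : Set (Fin mM → ℝ)) (x : Fin n → ℝ) (y : (Fin mM → ℝ) → (Fin n → ℝ)) : Prop :=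
  x ∈ X ∧ ∀ ξ ∈ U, y ξ ∈ X ∧ ∀ i, F (y ξ) ξ i ≤ 0

/-- Worst-case objective value, in the extended reals. -/
noncomputable def fObj (f : (Fin n → ℝ) → (Fin mM → ℝ) → ℝ) (U : Set (Fin mM → ℝ))
    (y : (Fin mM → ℝ) → (Fin n → ℝ)) : EReal :=
  ⨆ ξ ∈ U, (f (y ξ) ξ : EReal)

/-- Worst-case recovery cost w.r.t. the metric `d`, in the extended reals. -/
noncomputable def rObj (d : (Fin n → ℝ) → (Fin n → ℝ) → ℝ) (U : Set (Fin mM → ℝ))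
    (x : Fin n → ℝ) (y : (Fin mM → ℝ) → (Fin n → ℝ)) : EReal :=
  ⨆ ξ ∈ U, (d x (y ξ) : EReal)

/-- Pareto efficiency for `Rec(U)`. -/
def ParetoEfficient (X : Set (Fin n → ℝ)) (f : (Fin n → ℝ) → (Fin mM → ℝ) → ℝ)
    (F : (Fin n → ℝ) → (Fin mM → ℝ) → Fin m → ℝ) (d : (Fin n → ℝ) → (Fin n → ℝ) → ℝ)
    (U : Set (Fin mM → ℝ)) (x : Fin n → ℝ) (y : (Fin mM → ℝ) → (Fin n → ℝ)) : Prop :=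
  RecFeasible X F U x y ∧
    ¬ ∃ x' y', RecFeasible X F U x' y' ∧
      fObj f U y' ≤ fObj f U y ∧ rObj d U x' y' ≤ rObj d U x y ∧
      (fObj f U y' < fObj f U y ∨ rObj d U x' y' < rObj d U x y)

/-- `x` is recoverable-robust with respect to `U`. -/
def RecoverableRobust (X : Set (Fin n → ℝ)) (f : (Fin n → ℝ) → (Fin mM → ℝ) → ℝ)
    (F : (Fin n → ℝ) → (Fin mM → ℝ) → Fin m → ℝ) (d : (Fin n → ℝ) → (Fin n → ℝ) → ℝ)
    (U : Set (Fin mM → ℝ)) (x : Fin n → ℝ) : Prop :=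
  ∃ y, ParetoEfficient X f F d U x y

/-!
A second-stage policy `y` on `U` extends to `conv U` at no cost. The convex hull of the graph
`{(y ξ, ξ) | ξ ∈ U}` projects onto `conv U`, so each `q ∈ conv U` lifts to a point `(Y q, q)` of
it. Sublevel sets of jointly quasiconvex functions are convex, so `(Y q, q)` stays feasible, and
by the maximum principle for quasiconvex functions `f (Y q) q` and `d x (Y q)` are bounded by
values of `f` and `d x` at some scenario of `U`. Since restricting a policy from `conv U` to `U`
can only lower both objectives, Pareto dominance transfers between `Rec(U)` and `Rec(conv U)`
in both directions.
-/

theorem QuasiconvexOn.exists_ge_of_mem_convexHull {𝕜 E β : Type*} [Field 𝕜] [LinearOrder 𝕜]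
    [IsStrictOrderedRing 𝕜] [AddCommGroup E] [Module 𝕜 E] [LinearOrder β] {s t : Set E}
    {g : E → β} {x : E} (hg : QuasiconvexOn 𝕜 s g) (hts : t ⊆ s) (hx : x ∈ convexHull 𝕜 t) :
    ∃ y ∈ t, g x ≤ g y := by
  rw [convexHull_eq_union_convexHull_finite_subsets] at hx
  simp only [Set.mem_iUnion] at hx
  obtain ⟨u, hut, hxu⟩ := hx
  obtain ⟨y, hyu, hy_max⟩ :=
    u.exists_max_image g (by exact_mod_cast convexHull_nonempty_iff.1 ⟨x, hxu⟩)
  have hu_sub : (u : Set E) ⊆ {z ∈ s | g z ≤ g y} := fun z hz => ⟨hts (hut hz), hy_max z hz⟩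
  exact ⟨y, hut hyu, (convexHull_min hu_sub (hg (g y)) hxu).2⟩

theorem exists_prodMk_mem_convexHull {𝕜 E F : Type*} [Field 𝕜] [LinearOrder 𝕜]
    [IsStrictOrderedRing 𝕜] [AddCommGroup E] [Module 𝕜 E] [AddCommGroup F] [Module 𝕜 F]
    {T : Set (E × F)} {q : F} (hq : q ∈ convexHull 𝕜 (Prod.snd '' T)) :
    ∃ z, (z, q) ∈ convexHull 𝕜 T := by
  obtain ⟨p, hp, rfl⟩ : q ∈ LinearMap.snd 𝕜 E F '' convexHull 𝕜 T := by
    rwa [LinearMap.image_convexHull]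
  exact ⟨p.1, hp⟩

theorem RecFeasible.mono {X : Set (Fin n → ℝ)} {F : (Fin n → ℝ) → (Fin mM → ℝ) → Fin m → ℝ}
    {U V : Set (Fin mM → ℝ)} {x : Fin n → ℝ} {y : (Fin mM → ℝ) → (Fin n → ℝ)}
    (h : RecFeasible X F V x y) (hUV : U ⊆ V) : RecFeasible X F U x y :=
  ⟨h.1, fun ξ hξ => h.2 ξ (hUV hξ)⟩

/-- The objective vector of `Rec(U)`; Pareto dominance is the strict product order on it. -/
noncomputable def recObj (f : (Fin n → ℝ) → (Fin mM → ℝ) → ℝ)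
    (d : (Fin n → ℝ) → (Fin n → ℝ) → ℝ) (U : Set (Fin mM → ℝ)) (x : Fin n → ℝ)
    (y : (Fin mM → ℝ) → (Fin n → ℝ)) : EReal × EReal :=
  (fObj f U y, rObj d U x y)

theorem recObj_mono (f : (Fin n → ℝ) → (Fin mM → ℝ) → ℝ) (d : (Fin n → ℝ) → (Fin n → ℝ) → ℝ)
    {U V : Set (Fin mM → ℝ)} (hUV : U ⊆ V) (x : Fin n → ℝ) (y : (Fin mM → ℝ) → (Fin n → ℝ)) :
    recObj f d U x y ≤ recObj f d V x y :=
  ⟨biSup_mono hUV, biSup_mono hUV⟩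

theorem paretoEfficient_iff {X : Set (Fin n → ℝ)} {f : (Fin n → ℝ) → (Fin mM → ℝ) → ℝ}
    {F : (Fin n → ℝ) → (Fin mM → ℝ) → Fin m → ℝ} {d : (Fin n → ℝ) → (Fin n → ℝ) → ℝ}
    {U : Set (Fin mM → ℝ)} {x : Fin n → ℝ} {y : (Fin mM → ℝ) → (Fin n → ℝ)} :
    ParetoEfficient X f F d U x y ↔ RecFeasible X F U x y ∧
      ∀ x' y', RecFeasible X F U x' y' → ¬ recObj f d U x' y' < recObj f d U x y := by
  simp only [ParetoEfficient, recObj, Prod.lt_iff, not_exists, not_and]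
  refine and_congr_right fun _ => forall₂_congr fun x' y' => imp_congr_right fun _ => ?_
  constructor
  · rintro h (⟨hlt, hle⟩ | ⟨hle, hlt⟩)
    exacts [h hlt.le hle (.inl hlt), h hle hlt.le (.inr hlt)]
  · rintro h hf hr (hlt | hlt)
    exacts [h (.inl ⟨hlt, hr⟩), h (.inr ⟨hf, hlt⟩)]

theorem RecFeasible.exists_convexHull {X : Set (Fin n → ℝ)} (hX : Convex ℝ X)
    {f : (Fin n → ℝ) → (Fin mM → ℝ) → ℝ} {F : (Fin n → ℝ) → (Fin mM → ℝ) → Fin m → ℝ}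
    {d : (Fin n → ℝ) → (Fin n → ℝ) → ℝ}
    (hF : ∀ i, QuasiconvexOn ℝ Set.univ (fun p : (Fin n → ℝ) × (Fin mM → ℝ) => F p.1 p.2 i))
    (hf : QuasiconvexOn ℝ Set.univ (fun p : (Fin n → ℝ) × (Fin mM → ℝ) => f p.1 p.2))
    (hd_qc : ∀ x, QuasiconvexOn ℝ Set.univ (d x))
    {U : Set (Fin mM → ℝ)} {x : Fin n → ℝ} {y : (Fin mM → ℝ) → (Fin n → ℝ)}
    (h : RecFeasible X F U x y) :
    ∃ Y, RecFeasible X F (convexHull ℝ U) x Y ∧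
      recObj f d (convexHull ℝ U) x Y ≤ recObj f d U x y := by
  set G := (fun ξ => (y ξ, ξ)) '' U
  have hG_snd : Prod.snd '' G = U := by simp [G, Set.image_image]
  have hG_fst : Prod.fst '' G = y '' U := by simp [G, Set.image_image]
  choose! Y hY using fun q (hq : q ∈ convexHull ℝ U) =>
    exists_prodMk_mem_convexHull (hG_snd ▸ hq)
  have hY_fst (q) (hq : q ∈ convexHull ℝ U) : Y q ∈ convexHull ℝ (y '' U) := by
    rw [← hG_fst, ← LinearMap.coe_fst (R := ℝ), ← LinearMap.image_convexHull]
    exact ⟨_, hY q hq, rfl⟩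
  set C := {p : (Fin n → ℝ) × (Fin mM → ℝ) | p.1 ∈ X ∧ ∀ i, F p.1 p.2 i ≤ 0}
  have hC : Convex ℝ C := by
    simp only [C, Set.ofPred_and, Set.ofPred_forall]
    exact (hX.linear_preimage (LinearMap.fst ℝ _ _)).inter
      (convex_iInter fun i => by simpa using hF i 0)
  have hG_C : G ⊆ C := Set.image_subset_iff.2 fun ξ hξ => h.2 ξ hξ
  refine ⟨Y, ⟨h.1, fun q hq => convexHull_min hG_C hC (hY q hq)⟩, ?_, ?_⟩
  · refine iSup₂_le fun q hq => ?_
    obtain ⟨_, ⟨ξ, hξ, rfl⟩, hle⟩ :=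
      hf.exists_ge_of_mem_convexHull (Set.subset_univ _) (hY q hq)
    exact le_iSup₂_of_le ξ hξ (EReal.coe_le_coe_iff.2 hle)
  · refine iSup₂_le fun q hq => ?_
    obtain ⟨_, ⟨ξ, hξ, rfl⟩, hle⟩ :=
      (hd_qc x).exists_ge_of_mem_convexHull (Set.subset_univ _) (hY_fst q hq)
    exact le_iSup₂_of_le ξ hξ (EReal.coe_le_coe_iff.2 hle)

theorem recoverableRobust_convexHull_iff {X : Set (Fin n → ℝ)} (hX : Convex ℝ X)
    {f : (Fin n → ℝ) → (Fin mM → ℝ) → ℝ} {F : (Fin n → ℝ) → (Fin mM → ℝ) → Fin m → ℝ}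
    {d : (Fin n → ℝ) → (Fin n → ℝ) → ℝ}
    (hF : ∀ i, QuasiconvexOn ℝ Set.univ (fun p : (Fin n → ℝ) × (Fin mM → ℝ) => F p.1 p.2 i))
    (hf : QuasiconvexOn ℝ Set.univ (fun p : (Fin n → ℝ) × (Fin mM → ℝ) => f p.1 p.2))
    (hd_qc : ∀ x, QuasiconvexOn ℝ Set.univ (d x)) (U : Set (Fin mM → ℝ)) (x : Fin n → ℝ) :
    RecoverableRobust X f F d (convexHull ℝ U) x ↔ RecoverableRobust X f F d U x := by
  have hU := subset_convexHull ℝ U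
  simp only [RecoverableRobust, paretoEfficient_iff]
  constructor
  · rintro ⟨Y, hY, hY_opt⟩
    refine ⟨Y, hY.mono hU, fun x' y' hy' hlt => ?_⟩
    obtain ⟨Y', hY', hle⟩ := hy'.exists_convexHull hX hF hf hd_qc
    exact hY_opt x' Y' hY' (hle.trans_lt (hlt.trans_le (recObj_mono f d hU x Y)))
  · rintro ⟨y, hy, hy_opt⟩
    obtain ⟨Y, hY, hle⟩ := hy.exists_convexHull hX hF hf hd_qc
    refine ⟨Y, hY, fun x' Y' hY' hlt => ?_⟩
    exact hy_opt x' Y' (hY'.mono hU) ((recObj_mono f d hU x' Y').trans_lt (hlt.trans_le hle))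

theorem stmt6_general (X : Set (Fin n → ℝ)) (hX : Convex ℝ X)
    (f : (Fin n → ℝ) → (Fin mM → ℝ) → ℝ)
    (F : (Fin n → ℝ) → (Fin mM → ℝ) → Fin m → ℝ)
    (d : (Fin n → ℝ) → (Fin n → ℝ) → ℝ)
    -- joint quasiconvexity of the constraints and the objective in `(y, ξ)`:
    (hF : ∀ i, QuasiconvexOn ℝ Set.univ (fun p : (Fin n → ℝ) × (Fin mM → ℝ) => F p.1 p.2 i))
    (hf : QuasiconvexOn ℝ Set.univ (fun p : (Fin n → ℝ) × (Fin mM → ℝ) => f p.1 p.2))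
    -- quasiconvexity of the recovery costs in the second argument:
    (hd_qc : ∀ x, QuasiconvexOn ℝ Set.univ (d x))
    {N : ℕ} (ξ : Fin N → (Fin mM → ℝ)) :
    ∀ x ∈ X, (RecoverableRobust X f F d (convexHull ℝ (Set.range ξ)) x ↔
      RecoverableRobust X f F d (Set.range ξ) x) :=
  fun x _ => recoverableRobust_convexHull_iff hX hF hf hd_qc (Set.range ξ) x

theorem stmt6 (X : Set (Fin n → ℝ)) (hX : Convex ℝ X)
    (f : (Fin n → ℝ) → (Fin mM → ℝ) → ℝ)
    (F : (Fin n → ℝ) → (Fin mM → ℝ) → Fin m → ℝ)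
    (d : (Fin n → ℝ) → (Fin n → ℝ) → ℝ)
    -- `d` is a metric on `ℝ^n`:
    (hd_self : ∀ x y, d x y = 0 ↔ x = y)
    (hd_symm : ∀ x y, d x y = d y x)
    (hd_triangle : ∀ x y z, d x z ≤ d x y + d y z)
    -- joint quasiconvexity of the constraints and the objective in `(y, ξ)`:
    (hF : ∀ i, QuasiconvexOn ℝ Set.univ (fun p : (Fin n → ℝ) × (Fin mM → ℝ) => F p.1 p.2 i))
    (hf : QuasiconvexOn ℝ Set.univ (fun p : (Fin n → ℝ) × (Fin mM → ℝ) => f p.1 p.2))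
    -- quasiconvexity of the recovery costs in the second argument:
    (hd_qc : ∀ x, QuasiconvexOn ℝ Set.univ (d x))
    {N : ℕ} (ξ : Fin N → (Fin mM → ℝ)) :
    ∀ x ∈ X, (RecoverableRobust X f F d (convexHull ℝ (Set.range ξ)) x ↔
      RecoverableRobust X f F d (Set.range ξ) x) :=
  stmt6_general X hX f F d hF hf hd_qc ξ

end
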